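/- If two Bellman operators share the same policy π and discount γ ∈ [0,1) but have transition kernels p* and p_D and reward r bounded by R_max, and their fixed points are Q* and Q_D, then ‖Q* − Q_D‖∞ ≤ (γ R_max)/((1−γ)²) · sup_{(s,a)} Σ_{s'} |p*(s'|s,a) − p_D(s'|s,a)|. -/
import Mathlib


open Finset

noncomputable def bellman {S A : Type*} [Fintype S] [Fintype A]
    (r : S → A → ℝ) (p : S → A → S → ℝ) (π : S → A → ℝ) (γ : ℝ)
    (Q : S → A → ℝ) : S → A → ℝ :=
  fun s a => r s a + γ * ∑ s', p s a s' * ∑ a', π s' a' * Q s' a'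

/-- A probability-weighted sum of values bounded by `c` in absolute value is
bounded by `c`. -/
lemma wsum_abs_le {ι : Type*} [Fintype ι] (w v : ι → ℝ) (c : ℝ)
    (hw : ∀ i, 0 ≤ w i) (hws : ∑ i, w i = 1) (hv : ∀ i, |v i| ≤ c) :
    |∑ i, w i * v i| ≤ c := by
  calc |∑ i, w i * v i| ≤ ∑ i, |w i * v i| := Finset.abs_sum_le_sum_abs _ _
    _ ≤ ∑ i, w i * c := Finset.sum_le_sum (fun i _ => by
        rw [abs_mul, abs_of_nonneg (hw i)]
        exact mul_le_mul_of_nonneg_left (hv i) (hw i))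
    _ = c := by rw [← Finset.sum_mul, hws, one_mul]

/-- Sensitivity of the fixed point to the transition kernel:
`‖Q* − Q_D‖∞ ≤ (γ R_max)/((1−γ)²) · sup_{(s,a)} Σ_{s'} |p*(s'|s,a) − p_D(s'|s,a)|`. -/
theorem bellman_fixedPoint_kernel_sensitivity
    {S A : Type*} [Fintype S] [Fintype A] [Nonempty S] [Nonempty A]
    (r : S → A → ℝ) (pstar pD : S → A → S → ℝ) (π : S → A → ℝ) (γ Rmax : ℝ)
    (hγ0 : 0 ≤ γ) (hγ1 : γ < 1) (hr : ∀ s a, |r s a| ≤ Rmax)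
    (hpstar_nonneg : ∀ s a s', 0 ≤ pstar s a s')
    (hpstar_sum : ∀ s a, ∑ s', pstar s a s' = 1)
    (hpD_nonneg : ∀ s a s', 0 ≤ pD s a s')
    (hpD_sum : ∀ s a, ∑ s', pD s a s' = 1)
    (hπ_nonneg : ∀ s a, 0 ≤ π s a) (hπ_sum : ∀ s, ∑ a, π s a = 1)
    (Qstar QD : S → A → ℝ)
    (hstar : bellman r pstar π γ Qstar = Qstar)
    (hD : bellman r pD π γ QD = QD) :
    ‖Qstar - QD‖ ≤
      γ * Rmax / (1 - γ) ^ 2 *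
        ⨆ sa : S × A, ∑ s', |pstar sa.1 sa.2 s' - pD sa.1 sa.2 s'| := by
  have hγ' : 0 < 1 - γ := by linarith
  obtain ⟨s0⟩ := ‹Nonempty S›
  obtain ⟨a0⟩ := ‹Nonempty A›
  have hRmax : 0 ≤ Rmax := le_trans (abs_nonneg _) (hr s0 a0)
  set ε := ⨆ sa : S × A, ∑ s', |pstar sa.1 sa.2 s' - pD sa.1 sa.2 s'| with hεdef
  have hbdd : BddAbove (Set.range fun sa : S × A =>
      ∑ s', |pstar sa.1 sa.2 s' - pD sa.1 sa.2 s'|) :=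
    Set.Finite.bddAbove (Set.finite_range _)
  have hεle : ∀ s a, ∑ s', |pstar s a s' - pD s a s'| ≤ ε := fun s a =>
    le_ciSup hbdd (s, a)
  have hεnn : 0 ≤ ε :=
    le_trans (Finset.sum_nonneg fun _ _ => abs_nonneg _) (hεle s0 a0)
  set B := ‖QD‖ with hBdef
  have hBnn : 0 ≤ B := norm_nonneg _
  have habsQD : ∀ s a, |QD s a| ≤ B := fun s a =>
    le_trans (norm_le_pi_norm (QD s) a) (norm_le_pi_norm QD s)
  have hvD : ∀ s', |∑ a', π s' a' * QD s' a'| ≤ B := fun s' =>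
    wsum_abs_le _ _ _ (hπ_nonneg s') (hπ_sum s') (habsQD s')
  have hQDeq : ∀ s a, QD s a = r s a + γ * ∑ s', pD s a s' * ∑ a', π s' a' * QD s' a' :=
    fun s a => (congrFun (congrFun hD s) a).symm
  have hQstareq : ∀ s a,
      Qstar s a = r s a + γ * ∑ s', pstar s a s' * ∑ a', π s' a' * Qstar s' a' :=
    fun s a => (congrFun (congrFun hstar s) a).symm
  -- bound B ≤ Rmax / (1 - γ)
  have hBle : B ≤ Rmax / (1 - γ) := by
    have h1 : B ≤ Rmax + γ * B := by
      rw [hBdef]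
      refine (pi_norm_le_iff_of_nonneg (by positivity)).mpr fun s => ?_
      refine (pi_norm_le_iff_of_nonneg (by positivity)).mpr fun a => ?_
      rw [Real.norm_eq_abs, hQDeq s a]
      have h2 : |∑ s', pD s a s' * ∑ a', π s' a' * QD s' a'| ≤ B :=
        wsum_abs_le _ _ _ (hpD_nonneg s a) (hpD_sum s a) hvD
      calc |r s a + γ * ∑ s', pD s a s' * ∑ a', π s' a' * QD s' a'|
          ≤ |r s a| + |γ * ∑ s', pD s a s' * ∑ a', π s' a' * QD s' a'| := abs_add_le _ _
        _ ≤ Rmax + γ * B := by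
            rw [abs_mul, abs_of_nonneg hγ0]
            exact add_le_add (hr s a) (mul_le_mul_of_nonneg_left h2 hγ0)
    rw [le_div_iff₀ hγ']
    nlinarith
  -- the main pointwise estimate
  set M := ‖Qstar - QD‖ with hMdef
  have habsM : ∀ s a, |Qstar s a - QD s a| ≤ M := fun s a =>
    le_trans (norm_le_pi_norm ((Qstar - QD) s) a) (norm_le_pi_norm (Qstar - QD) s)
  have hvdiff : ∀ s', |∑ a', π s' a' * Qstar s' a' - ∑ a', π s' a' * QD s' a'| ≤ M := by
    intro s'
    rw [← Finset.sum_sub_distrib]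
    have : ∀ a', π s' a' * Qstar s' a' - π s' a' * QD s' a'
        = π s' a' * (Qstar s' a' - QD s' a') := fun a' => by ring
    simp_rw [this]
    exact wsum_abs_le _ _ _ (hπ_nonneg s') (hπ_sum s') (habsM s')
  have key : ∀ s a, |Qstar s a - QD s a| ≤ γ * M + γ * (Rmax / (1 - γ)) * ε := by
    intro s a
    rw [hQstareq s a, hQDeq s a]
    have hsplit : (r s a + γ * ∑ s', pstar s a s' * ∑ a', π s' a' * Qstar s' a')
        - (r s a + γ * ∑ s', pD s a s' * ∑ a', π s' a' * QD s' a')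
        = γ * ((∑ s', pstar s a s' *
            ((∑ a', π s' a' * Qstar s' a') - ∑ a', π s' a' * QD s' a'))
          + ∑ s', (pstar s a s' - pD s a s') * ∑ a', π s' a' * QD s' a') := by
      calc (r s a + γ * ∑ s', pstar s a s' * ∑ a', π s' a' * Qstar s' a')
          - (r s a + γ * ∑ s', pD s a s' * ∑ a', π s' a' * QD s' a')
          = γ * ((∑ s', pstar s a s' * ∑ a', π s' a' * Qstar s' a')
              - ∑ s', pD s a s' * ∑ a', π s' a' * QD s' a') := by ring
        _ = γ * ∑ s', (pstar s a s' * ∑ a', π s' a' * Qstar s' a'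
              - pD s a s' * ∑ a', π s' a' * QD s' a') := by
            rw [Finset.sum_sub_distrib]
        _ = γ * ((∑ s', pstar s a s' *
              ((∑ a', π s' a' * Qstar s' a') - ∑ a', π s' a' * QD s' a'))
            + ∑ s', (pstar s a s' - pD s a s') * ∑ a', π s' a' * QD s' a') := by
            rw [← Finset.sum_add_distrib]
            exact congrArg (γ * ·) (Finset.sum_congr rfl fun s' _ => by ring)
    rw [hsplit, abs_mul, abs_of_nonneg hγ0]
    have h1 : |∑ s', pstar s a s' *
        ((∑ a', π s' a' * Qstar s' a') - ∑ a', π s' a' * QD s' a')| ≤ M :=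
      wsum_abs_le _ _ _ (hpstar_nonneg s a) (hpstar_sum s a) hvdiff
    have h2 : |∑ s', (pstar s a s' - pD s a s') * ∑ a', π s' a' * QD s' a'|
        ≤ (Rmax / (1 - γ)) * ε := by
      calc |∑ s', (pstar s a s' - pD s a s') * ∑ a', π s' a' * QD s' a'|
          ≤ ∑ s', |(pstar s a s' - pD s a s') * ∑ a', π s' a' * QD s' a'| :=
            Finset.abs_sum_le_sum_abs _ _
        _ ≤ ∑ s', |pstar s a s' - pD s a s'| * B := Finset.sum_le_sum (fun s' _ => by
            rw [abs_mul]
            exact mul_le_mul_of_nonneg_left (hvD s') (abs_nonneg _))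
        _ = (∑ s', |pstar s a s' - pD s a s'|) * B := (Finset.sum_mul _ _ _).symm
        _ ≤ ε * (Rmax / (1 - γ)) := by
            apply mul_le_mul (hεle s a) hBle hBnn hεnn
        _ = (Rmax / (1 - γ)) * ε := mul_comm _ _
    calc γ * |_ + _| ≤ γ * (M + (Rmax / (1 - γ)) * ε) := by
          exact mul_le_mul_of_nonneg_left
            (le_trans (abs_add_le _ _) (add_le_add h1 h2)) hγ0
      _ = γ * M + γ * (Rmax / (1 - γ)) * ε := by ring
  have hMnn : 0 ≤ M := norm_nonneg _
  have hMle : M ≤ γ * M + γ * (Rmax / (1 - γ)) * ε := by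
    rw [hMdef]
    refine (pi_norm_le_iff_of_nonneg ?_).mpr fun s => ?_
    · have : 0 ≤ γ * (Rmax / (1 - γ)) * ε := by positivity
      nlinarith
    refine (pi_norm_le_iff_of_nonneg ?_).mpr fun a => ?_
    · have : 0 ≤ γ * (Rmax / (1 - γ)) * ε := by positivity
      nlinarith
    simpa [Real.norm_eq_abs] using key s a
  rw [div_mul_eq_mul_div, le_div_iff₀ (pow_pos hγ' 2)]
  have hfield : γ * (Rmax / (1 - γ)) * ε * (1 - γ) = γ * Rmax * ε := by
    field_simp
  nlinarith [mul_le_mul_of_nonneg_right hMle hγ'.le]
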